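/- Let ρ ∈ (0,1), a ≥ 2 an integer, and m a positive integer with m ≥ aρ/(1-ρ). Define g(a, ρ, m) = 1 - a·(∑_{i=0}^{m} ρ^i(1-ρ)·(i/m)) - a·ρ^{m+1}. Then g(a, ρ, m) ≥ 0. -/

import Mathlib

open Finset

/-! After multiplying by `m`, the expected refund `∑ i (1 - ρ) ρ^i` plus the loss `m ρ^(m+1)` of
an attack that runs through all `m` blocks telescopes to the geometric sum `ρ + ⋯ + ρ^m`. So
`m · g(a, ρ, m) = m - a (ρ + ⋯ + ρ^m) ≥ m - a ρ / (1 - ρ)`, which is nonnegative by the choice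
of `m`. -/

theorem one_sub_mul_sum_range_mul_pow_add {R : Type*} [CommRing R] (ρ : R) (m : ℕ) :
    (1 - ρ) * ∑ i ∈ range (m + 1), (i : R) * ρ ^ i + m * ρ ^ (m + 1) =
      ∑ i ∈ Ico 1 (m + 1), ρ ^ i := by
  induction m with
  | zero => simp
  | succ n ih =>
    rw [sum_range_succ, sum_Ico_succ_top (by omega), ← ih]
    push_cast
    ring

theorem stmt_9_general (ρ : ℝ) (h0 : 0 < ρ) (h1 : ρ < 1) (a : ℕ)
    (m : ℕ) (hm : 1 ≤ m) (hdepth : (m : ℝ) ≥ a * ρ / (1 - ρ)) :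
    1 - (a : ℝ) * (∑ i ∈ range (m + 1), ρ ^ i * (1 - ρ) * ((i : ℝ) / m)) -
      (a : ℝ) * ρ ^ (m + 1) ≥ 0 := by
  have hm_pos : (0 : ℝ) < m := by exact_mod_cast hm
  have hrefund : ∑ i ∈ range (m + 1), ρ ^ i * (1 - ρ) * ((i : ℝ) / m) =
      ((1 - ρ) * ∑ i ∈ range (m + 1), (i : ℝ) * ρ ^ i) / m := by
    rw [mul_sum, sum_div]
    refine sum_congr rfl fun i _ => ?_
    ring
  have htelescope := one_sub_mul_sum_range_mul_pow_add ρ m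
  have hgeom : ∑ i ∈ Ico 1 (m + 1), ρ ^ i ≤ ρ / (1 - ρ) := by
    simpa using geom_sum_Ico_le_of_lt_one (m := 1) (n := m + 1) h0.le h1
  have hbound : (a : ℝ) * ∑ i ∈ Ico 1 (m + 1), ρ ^ i ≤ m := by
    rw [mul_div_assoc] at hdepth
    exact (mul_le_mul_of_nonneg_left hgeom (Nat.cast_nonneg a)).trans hdepth
  have hflux : 1 - (a : ℝ) * (((1 - ρ) * ∑ i ∈ range (m + 1), (i : ℝ) * ρ ^ i) / m) -
      a * ρ ^ (m + 1) = (m - a * ∑ i ∈ Ico 1 (m + 1), ρ ^ i) / m := by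
    rw [← htelescope]
    field_simp
    ring
  rw [hrefund, hflux]
  exact div_nonneg (sub_nonneg.mpr hbound) hm_pos.le

/-- Zero-loss payment system: if `m ≥ aρ/(1-ρ)` then the deposit flux factor
`g(a, ρ, m)` is nonnegative. -/
theorem stmt_9 (ρ : ℝ) (h0 : 0 < ρ) (h1 : ρ < 1) (a : ℕ) (ha : 2 ≤ a)
    (m : ℕ) (hm : 1 ≤ m) (hdepth : (m : ℝ) ≥ a * ρ / (1 - ρ)) :
    1 - (a : ℝ) * (∑ i ∈ range (m + 1), ρ ^ i * (1 - ρ) * ((i : ℝ) / m)) -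
      (a : ℝ) * ρ ^ (m + 1) ≥ 0 :=
  stmt_9_general ρ h0 h1 a m hm hdepth
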